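/- arXiv:2410.13180 — 3 statements merged into one kernel-verified Lean document; each statement's English description precedes it below -/
import Mathlib

section
/- Let H be an N_B×N_A complex matrix, B an N_A×N_s complex matrix, and Γ an N_B×N_B Hermitian positive definite complex matrix. Set M := H·B·Bᴴ·Hᴴ + Γ and C* := M⁻¹·H·B, and for an N_B×N_s complex matrix C define E(C) := (I_{N_s} − Cᴴ·H·B)·(I_{N_s} − Cᴴ·H·B)ᴴ + Cᴴ·Γ·C. Then for every N_s×N_s Hermitian positive definite matrix W and every N_B×N_s complex matrix C, one has ln det(W) − Re(Tr(W·E(C))) + N_s ≤ ln det(I_{N_B} + H·B·Bᴴ·Hᴴ·Γ⁻¹), and equality holds when C = C* and W = E(C*)⁻¹. (Rate–WMMSE equivalence: the achievable rate equals the maximum of the weighted-MMSE objective.) -/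
/-!
Completing the square in `C` gives `E(C) = E(C*) + (C - C*)ᴴ M (C - C*)`, and the Woodbury
identity gives `E(C*)⁻¹ = 1 + Bᴴ Hᴴ Γ⁻¹ H B`, whose determinant is the rate determinant by the
Weinstein–Aronszajn identity. What remains is `ln det W - Re Tr (W A⁻¹) + n ≤ ln det A` for
positive definite `W`, `A`: applying `ln x ≤ x - 1` to the eigenvalues of `A^{-1/2} W A^{-1/2}`
proves it, with equality at `W = A`.
-/

open Matrix ComplexOrder

namespace Matrix

variable {n 𝕜 : Type*} [Fintype n] [DecidableEq n] [RCLike 𝕜] {A W : Matrix n n 𝕜}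

open RCLike

lemma IsHermitian.im_det (hA : A.IsHermitian) : im A.det = 0 := by
  rw [← conj_eq_iff_im, ← star_def, ← det_conjTranspose, hA.eq]

lemma IsHermitian.re_det_mul (hA : A.IsHermitian) (B : Matrix n n 𝕜) :
    re (A * B).det = re A.det * re B.det := by
  rw [det_mul, mul_re, hA.im_det, zero_mul, sub_zero]

lemma PosDef.re_det_pos (hA : A.PosDef) : 0 < re A.det :=
  (pos_iff.mp hA.det_pos).1

lemma PosDef.log_re_det_inv (hA : A.PosDef) : Real.log (re A⁻¹.det) = -Real.log (re A.det) := by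
  have h : re A.det * re A⁻¹.det = 1 := by
    rw [← hA.isHermitian.re_det_mul, mul_nonsing_inv _ ((isUnit_iff_isUnit_det A).mp hA.isUnit),
      det_one, one_re]
  rw [eq_inv_of_mul_eq_one_right h, Real.log_inv]

lemma PosDef.log_re_det_le_re_trace_sub_card (hA : A.PosDef) :
    Real.log (re A.det) ≤ re A.trace - Fintype.card n := by
  set μ := hA.isHermitian.eigenvalues
  have hpos : ∀ i, 0 < μ i := hA.eigenvalues_pos
  have hdet : re A.det = ∏ i, μ i := by
    rw [hA.isHermitian.det_eq_prod_eigenvalues, ← ofReal_prod, ofReal_re]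
  have htrace : re A.trace = ∑ i, μ i := by
    rw [hA.isHermitian.trace_eq_sum_eigenvalues, ← ofReal_sum, ofReal_re]
  rw [hdet, htrace, Real.log_prod fun i _ => (hpos i).ne']
  calc ∑ i, Real.log (μ i) ≤ ∑ i, (μ i - 1) :=
        Finset.sum_le_sum fun i _ => Real.log_le_sub_one_of_pos (hpos i)
    _ = ∑ i, μ i - Fintype.card n := by simp [Finset.sum_sub_distrib]

open scoped MatrixOrder in
lemma PosDef.log_re_det_add_log_re_det_le_re_trace_mul_sub_card (hW : W.PosDef) (hA : A.PosDef) :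
    Real.log (re W.det) + Real.log (re A.det) ≤ re (W * A).trace - Fintype.card n := by
  set S := CFC.sqrt A
  have hSH : S.IsHermitian := (CFC.sqrt_nonneg A).posSemidef.isHermitian
  have hSS : S * S = A := CFC.sqrt_mul_sqrt_self A hA.posSemidef.nonneg
  have hSunit : IsUnit S := by
    rw [isUnit_iff_isUnit_det, isUnit_iff_ne_zero]
    intro h
    simpa [← hSS, h] using hA.det_pos.ne'
  have hX : (S * W * S).PosDef := by
    simpa only [hSH.eq] using hW.conjTranspose_mul_mul_same (mulVec_injective_of_isUnit hSunit)
  have hdet : re (S * W * S).det = re W.det * re A.det := by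
    rw [mul_assoc, hSH.re_det_mul, hW.isHermitian.re_det_mul, ← hSS, hSH.re_det_mul]
    ring
  have htrace : (S * W * S).trace = (W * A).trace := by
    rw [trace_mul_cycle, hSS, trace_mul_comm]
  have := hX.log_re_det_le_re_trace_sub_card
  rwa [hdet, htrace, Real.log_mul hW.re_det_pos.ne' hA.re_det_pos.ne'] at this

lemma PosDef.log_re_det_sub_re_trace_mul_inv_add_card_le (hW : W.PosDef) (hA : A.PosDef) :
    Real.log (re W.det) - re (W * A⁻¹).trace + Fintype.card n ≤ Real.log (re A.det) := by
  have := hW.log_re_det_add_log_re_det_le_re_trace_mul_sub_card hA.inv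
  rw [hA.log_re_det_inv] at this
  linarith

open scoped MatrixOrder in
lemma PosSemidef.re_trace_mul_nonneg {Δ : Matrix n n 𝕜} (hW : W.PosSemidef)
    (hΔ : Δ.PosSemidef) :
    0 ≤ re (W * Δ).trace := by
  obtain ⟨N, rfl⟩ := CStarAlgebra.nonneg_iff_eq_star_mul_self.mp hΔ.nonneg
  rw [← mul_assoc, trace_mul_cycle]
  exact (nonneg_iff.mp (hW.mul_mul_conjTranspose_same N).trace_nonneg).1

end Matrix

section WMMSE

variable {ι σ 𝕜 : Type*} [Fintype ι] [DecidableEq ι] [Fintype σ] [DecidableEq σ]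
  [Field 𝕜] [StarRing 𝕜]
  (G : Matrix ι σ 𝕜) (Γ : Matrix ι ι 𝕜)

/-- The error covariance `E(C)` of the equalizer `C` for the effective channel `G = H * B`. -/
def mseMatrix (C : Matrix ι σ 𝕜) : Matrix σ σ 𝕜 :=
  (1 - Cᴴ * G) * (1 - Cᴴ * G)ᴴ + Cᴴ * Γ * C

variable {G Γ}

lemma mseMatrix_eq_sub_add (hΓ : Γ.IsHermitian) (hM : IsUnit (G * Gᴴ + Γ))
    (C : Matrix ι σ 𝕜) :
    mseMatrix G Γ C = 1 - Gᴴ * (G * Gᴴ + Γ)⁻¹ * G +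
      (C - (G * Gᴴ + Γ)⁻¹ * G)ᴴ * (G * Gᴴ + Γ) * (C - (G * Gᴴ + Γ)⁻¹ * G) := by
  set M := G * Gᴴ + Γ
  have hMH : Mᴴ = M := by simp [M, hΓ.eq]
  have hΓM : Γ = M - G * Gᴴ := by simp [M]
  have hdet : IsUnit M.det := (isUnit_iff_isUnit_det M).mp hM
  rw [mseMatrix, hΓM]
  simp only [conjTranspose_sub, conjTranspose_one, conjTranspose_mul, conjTranspose_nonsing_inv,
    conjTranspose_conjTranspose, hMH, Matrix.mul_sub, Matrix.sub_mul, Matrix.mul_one,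
    Matrix.one_mul, Matrix.mul_assoc,
    mul_nonsing_inv_cancel_left M _ hdet, nonsing_inv_mul_cancel_left M _ hdet]
  abel

lemma one_sub_mul_inv_mul_eq_inv (hΓ : IsUnit Γ) (hM : IsUnit (G * Gᴴ + Γ)) :
    1 - Gᴴ * (G * Gᴴ + Γ)⁻¹ * G = (1 + Gᴴ * Γ⁻¹ * G)⁻¹ := by
  rw [add_mul_mul_inv_eq_sub _ _ _ _ isUnit_one (isUnit_nonsing_inv_iff.mpr hΓ)]
  · simp [nonsing_inv_nonsing_inv _ ((isUnit_iff_isUnit_det Γ).mp hΓ), add_comm]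
  · simpa [nonsing_inv_nonsing_inv _ ((isUnit_iff_isUnit_det Γ).mp hΓ), add_comm] using hM

end WMMSE

/-- Rate–WMMSE equivalence: for every Hermitian positive definite
weight `W` and every equalizer `C`, `ln det W − Re Tr(W·E(C)) + N_s ≤
ln det(I + H·B·Bᴴ·Hᴴ·Γ⁻¹)`, with equality at `C = C* = M⁻¹·H·B`,
`W = E(C*)⁻¹`. -/
theorem rate_wmmse_equivalence (nB nA ns : ℕ)
    (H : Matrix (Fin nB) (Fin nA) ℂ) (B : Matrix (Fin nA) (Fin ns) ℂ)
    (Γ : Matrix (Fin nB) (Fin nB) ℂ) (hΓ : Γ.PosDef)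
    (M : Matrix (Fin nB) (Fin nB) ℂ)
    (hM : M = H * B * Bᴴ * Hᴴ + Γ)
    (Cstar : Matrix (Fin nB) (Fin ns) ℂ)
    (hCstar : Cstar = M⁻¹ * H * B)
    (E : Matrix (Fin nB) (Fin ns) ℂ → Matrix (Fin ns) (Fin ns) ℂ)
    (hE : ∀ C, E C = (1 - Cᴴ * H * B) * (1 - Cᴴ * H * B)ᴴ + Cᴴ * Γ * C) :
    (∀ (W : Matrix (Fin ns) (Fin ns) ℂ), W.PosDef →
      ∀ C : Matrix (Fin nB) (Fin ns) ℂ,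
        Real.log (W.det).re - ((W * E C).trace).re + (ns : ℝ) ≤
          Real.log (((1 : Matrix (Fin nB) (Fin nB) ℂ) + H * B * Bᴴ * Hᴴ * Γ⁻¹).det).re) ∧
    (Real.log (((E Cstar)⁻¹).det).re - (((E Cstar)⁻¹ * E Cstar).trace).re + (ns : ℝ) =
      Real.log (((1 : Matrix (Fin nB) (Fin nB) ℂ) + H * B * Bᴴ * Hᴴ * Γ⁻¹).det).re) := by
  set G := H * B
  have hGG : H * B * Bᴴ * Hᴴ = G * Gᴴ := by simp only [G, conjTranspose_mul, Matrix.mul_assoc]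
  replace hM : M = G * Gᴴ + Γ := hGG ▸ hM
  replace hCstar : Cstar = M⁻¹ * G := hCstar.trans (Matrix.mul_assoc _ _ _)
  obtain rfl : E = mseMatrix G Γ := funext fun C => by
    rw [hE, mseMatrix]
    simp only [G, Matrix.mul_assoc]
  set P := 1 + Gᴴ * Γ⁻¹ * G
  have hMpd : M.PosDef := hM ▸ hΓ.posSemidef_add (posSemidef_self_mul_conjTranspose G)
  have hPpd : P.PosDef :=
    PosDef.one.add_posSemidef (hΓ.inv.posSemidef.conjTranspose_mul_mul_same G)
  have hPdet : IsUnit P.det := (isUnit_iff_isUnit_det P).mp hPpd.isUnit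
  have hmse (C) : mseMatrix G Γ C = P⁻¹ + (C - Cstar)ᴴ * M * (C - Cstar) := by
    subst hM hCstar
    rw [mseMatrix_eq_sub_add hΓ.isHermitian hMpd.isUnit,
      one_sub_mul_inv_mul_eq_inv hΓ.isUnit hMpd.isUnit]
  have hrate : (1 + H * B * Bᴴ * Hᴴ * Γ⁻¹).det = P.det := by
    rw [hGG, Matrix.mul_assoc, det_one_add_mul_comm]
  rw [hrate]
  refine ⟨fun W hW C => ?_, ?_⟩
  · calc _ ≤ Real.log W.det.re - (W * P⁻¹).trace.re + ns := by
          have := hW.posSemidef.re_trace_mul_nonneg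
            (hMpd.posSemidef.conjTranspose_mul_mul_same (C - Cstar))
          rw [RCLike.re_to_complex] at this
          rw [hmse, Matrix.mul_add, trace_add, Complex.add_re]
          linarith
      _ ≤ Real.log P.det.re := by
          simpa using hW.log_re_det_sub_re_trace_mul_inv_add_card_le hPpd
  · rw [hmse, sub_self, conjTranspose_zero, Matrix.zero_mul, Matrix.zero_mul, add_zero,
      nonsing_inv_nonsing_inv _ hPdet, mul_nonsing_inv _ hPdet]
    simp
end

section
/- Let ξ > 0, ν ∈ ℝ, E₀ ∈ ℝ, E_m > 0 be reals, set c := exp(−ξ·E₀ + ν), and define γ(x) := max(0, (E_m/c)·((1 + c)/(1 + exp(−ξ·x + ν)) − 1)). Then for every t with 0 < t < E_m and every E ∈ ℝ: γ(E) ≥ t if and only if E ≥ E₀ − ξ⁻¹·ln((E_m − t)/(E_m + t·c)). (Equivalence of the harvested-power constraint γ(E_in) ≥ E_th with the input-power constraint E_in ≥ γ̄(E_th).) -/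
open Real

lemma le_max_zero_iff_of_pos {t a : ℝ} (ht : 0 < t) : t ≤ max 0 a ↔ t ≤ a :=
  le_max_iff.trans (or_iff_right ht.not_ge)

lemma le_div_mul_div_one_add_sub_one_iff {a c t u : ℝ} (hc : 0 < c) (hu : 0 < 1 + u)
    (hatc : 0 < a + t * c) :
    t ≤ a / c * ((1 + c) / (1 + u) - 1) ↔ u ≤ (a - t) / (a + t * c) * c := by
  have hrhs : a / c * ((1 + c) / (1 + u) - 1) = a * (c - u) / (c * (1 + u)) := by
    field_simp
    ring
  rw [hrhs, le_div_iff₀ (by positivity), div_mul_eq_mul_div, le_div_iff₀ hatc]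
  constructor <;> intro h <;> nlinarith

lemma exp_neg_mul_add_le_exp_mul_iff {ξ ν E E₀ r : ℝ} (hξ : 0 < ξ) (hr : 0 < r) :
    exp (-ξ * E + ν) ≤ r * exp (-ξ * E₀ + ν) ↔ E₀ - ξ⁻¹ * log r ≤ E := by
  rw [← exp_log hr, ← exp_add, exp_le_exp, log_exp, sub_le_comm, le_inv_mul_iff₀ hξ]
  constructor <;> intro h <;> linarith

theorem eh_constraint_equivalence_general (ξ ν E₀ Em : ℝ) (hξ : 0 < ξ)
    (c : ℝ) (hc : c = Real.exp (-ξ * E₀ + ν))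
    (γ : ℝ → ℝ)
    (hγ : ∀ x, γ x = max 0 ((Em / c) * ((1 + c) / (1 + Real.exp (-ξ * x + ν)) - 1))) :
    ∀ t : ℝ, 0 < t → t < Em → ∀ E : ℝ,
      (γ E ≥ t ↔ E ≥ E₀ - ξ⁻¹ * Real.log ((Em - t) / (Em + t * c))) := by
  intro t ht htEm E
  have hc0 : 0 < c := hc ▸ exp_pos _
  have hden : 0 < Em + t * c := by nlinarith
  rw [ge_iff_le, ge_iff_le, hγ, le_max_zero_iff_of_pos ht,
    le_div_mul_div_one_add_sub_one_iff hc0 (by positivity) hden, hc,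
    exp_neg_mul_add_le_exp_mul_iff hξ (div_pos (by linarith) (hc ▸ hden))]

/-- Equivalence of the harvested-power constraint `γ(E) ≥ t` with the
input-power constraint `E ≥ E₀ − ξ⁻¹·ln((E_m − t)/(E_m + t·c))` for `0 < t < E_m`. -/
theorem eh_constraint_equivalence (ξ ν E₀ Em : ℝ) (hξ : 0 < ξ) (hEm : 0 < Em)
    (c : ℝ) (hc : c = Real.exp (-ξ * E₀ + ν))
    (γ : ℝ → ℝ)
    (hγ : ∀ x, γ x = max 0 ((Em / c) * ((1 + c) / (1 + Real.exp (-ξ * x + ν)) - 1))) :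
    ∀ t : ℝ, 0 < t → t < Em → ∀ E : ℝ,
      (γ E ≥ t ↔ E ≥ E₀ - ξ⁻¹ * Real.log ((Em - t) / (Em + t * c))) :=
  eh_constraint_equivalence_general ξ ν E₀ Em hξ c hc γ hγ
end

section
/- Let H be an N_B×N_A complex matrix, B an N_A×N_s complex matrix, and Γ an N_B×N_B Hermitian positive definite complex matrix, and set M := H·B·Bᴴ·Hᴴ + Γ. Then the minimum MSE matrix E* := I_{N_s} − Bᴴ·Hᴴ·M⁻¹·H·B is Hermitian positive definite (in particular invertible, so the optimal weight W* = (E*)⁻¹ in the WMMSE reformulation is well defined). -/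
open Matrix ComplexOrder

/-- The minimum MSE matrix `E* = I − Bᴴ·Hᴴ·M⁻¹·H·B` with
`M = H·B·Bᴴ·Hᴴ + Γ` (Γ Hermitian positive definite) is Hermitian positive definite;
in particular the optimal WMMSE weight `W* = (E*)⁻¹` is well defined. -/
theorem minimum_mse_posdef (nB nA ns : ℕ)
    (H : Matrix (Fin nB) (Fin nA) ℂ) (B : Matrix (Fin nA) (Fin ns) ℂ)
    (Γ : Matrix (Fin nB) (Fin nB) ℂ) (hΓ : Γ.PosDef)
    (M : Matrix (Fin nB) (Fin nB) ℂ)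
    (hM : M = H * B * Bᴴ * Hᴴ + Γ) :
    ((1 : Matrix (Fin ns) (Fin ns) ℂ) - Bᴴ * Hᴴ * M⁻¹ * H * B).PosDef := by
  set A : Matrix (Fin nB) (Fin ns) ℂ := H * B with hA
  have hAeq : H * B * Bᴴ * Hᴴ = A * Aᴴ := by
    rw [hA, conjTranspose_mul, Matrix.mul_assoc]
  have hMpd : M.PosDef := by
    rw [hM, hAeq]
    exact Matrix.PosDef.posSemidef_add (posSemidef_self_mul_conjTranspose A) hΓ
  have hKpd : ((1 : Matrix (Fin ns) (Fin ns) ℂ) + Aᴴ * Γ⁻¹ * A).PosDef := by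
    have := (hΓ.inv.posSemidef.conjTranspose_mul_mul_same A)
    exact Matrix.PosDef.add_posSemidef Matrix.PosDef.one (by simpa [Matrix.mul_assoc] using this)
  have hMinv : M⁻¹ * M = 1 := Matrix.nonsing_inv_mul M hMpd.det_pos.ne'.isUnit
  have hΓinv : Γ * Γ⁻¹ = 1 := Matrix.mul_nonsing_inv Γ hΓ.det_pos.ne'.isUnit
  -- key : M⁻¹ * (A * Aᴴ) = 1 - M⁻¹ * Γ
  have key : M⁻¹ * (A * Aᴴ) = 1 - M⁻¹ * Γ := by
    have : M⁻¹ * (A * Aᴴ + Γ) = 1 := by rw [← hAeq, ← hM]; exact hMinv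
    rw [mul_add] at this
    linear_combination (norm := noncomm_ring) this
  have key2 : M⁻¹ * Γ * Γ⁻¹ = M⁻¹ := by
    rw [Matrix.mul_assoc, hΓinv, Matrix.mul_one]
  have hE : ((1 : Matrix (Fin ns) (Fin ns) ℂ) - Aᴴ * M⁻¹ * A) *
      ((1 : Matrix (Fin ns) (Fin ns) ℂ) + Aᴴ * Γ⁻¹ * A) = 1 := by
    have expand : ((1 : Matrix (Fin ns) (Fin ns) ℂ) - Aᴴ * M⁻¹ * A) *
        ((1 : Matrix (Fin ns) (Fin ns) ℂ) + Aᴴ * Γ⁻¹ * A)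
        = 1 + Aᴴ * Γ⁻¹ * A - Aᴴ * M⁻¹ * A - Aᴴ * (M⁻¹ * (A * Aᴴ) * Γ⁻¹) * A := by
      simp only [Matrix.sub_mul, Matrix.mul_add, Matrix.mul_one, Matrix.one_mul, Matrix.mul_assoc]
      abel
    rw [expand, key]
    have : ((1 : Matrix (Fin nB) (Fin nB) ℂ) - M⁻¹ * Γ) * Γ⁻¹ = Γ⁻¹ - M⁻¹ := by
      rw [sub_mul, one_mul, key2]
    rw [this, Matrix.mul_sub, Matrix.sub_mul]
    abel
  have hEK : (1 : Matrix (Fin ns) (Fin ns) ℂ) - Aᴴ * M⁻¹ * A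
      = ((1 : Matrix (Fin ns) (Fin ns) ℂ) + Aᴴ * Γ⁻¹ * A)⁻¹ :=
    Matrix.inv_eq_left_inv hE ▸ rfl
  have goal_eq : (1 : Matrix (Fin ns) (Fin ns) ℂ) - Bᴴ * Hᴴ * M⁻¹ * H * B
      = (1 : Matrix (Fin ns) (Fin ns) ℂ) - Aᴴ * M⁻¹ * A := by
    simp only [hA, conjTranspose_mul, Matrix.mul_assoc]
  rw [goal_eq, hEK]
  exact hKpd.inv
end
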